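/- arXiv:1907.00387 — 6 statements merged into one kernel-verified Lean document; each statement's English description precedes it below -/
import Mathlib

section
/- Uniform Gronwall Lemma: Let t0 < t1 be real numbers and let g, h, y be three positive locally integrable functions on (t0, t1), with y differentiable and satisfying y'(t) ≤ g(t)·y(t) + h(t) for all t ∈ (t0, t1). Suppose there are positive constants α, a1, a2, a3 such that for every t with t0 ≤ t and t + α < t1 one has ∫_t^{t+α} g(τ) dτ ≤ a1, ∫_t^{t+α} h(τ) dτ ≤ a2, and ∫_t^{t+α} y(τ) dτ ≤ a3. Then for every t with t0 ≤ t and t + α < t1, y(t + α) ≤ (a3/α + a2)·e^{a1}. -/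
/-!
Integrating `y' ≤ g y + h` from `s` to `t + α` gives `y ≤ K + ∫ g y` with `K = y s + ∫ h`, and
Gronwall's inequality turns this into `y (t + α) ≤ (y s + a2) e^{a1}` for every `s ∈ [t, t + α]`.
Gronwall holds for a merely integrable `g` because `e^{-∫ g} (K + ∫ g y)` is absolutely continuous
with a.e. nonpositive derivative. Averaging the bound over `s` and using `∫ y ≤ a3` gives the claim.
-/

open MeasureTheory intervalIntegral

open Set Filter Topology

theorem intervalIntegral.integral_mono_interval_of_nonneg {f : ℝ → ℝ} {a b c d : ℝ} (hca : c ≤ a)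
    (hab : a ≤ b) (hbd : b ≤ d) (hf0 : ∀ x ∈ Icc c d, 0 ≤ f x)
    (hf : IntervalIntegrable f volume c d) :
    ∫ x in a..b, f x ≤ ∫ x in c..d, f x :=
  integral_mono_interval hca hab hbd
    ((ae_restrict_iff' measurableSet_Ioc).2 (.of_forall fun x hx ↦ hf0 x (Ioc_subset_Icc_self hx)))
    hf

theorem LipschitzOnWith.comp_absolutelyContinuousOnInterval {X Y : Type*} [PseudoMetricSpace X]
    [PseudoMetricSpace Y] {φ : X → Y} {K : NNReal} {s : Set X} {f : ℝ → X} {a b : ℝ}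
    (hφ : LipschitzOnWith K φ s) (hf : AbsolutelyContinuousOnInterval f a b)
    (hfs : MapsTo f (uIcc a b) s) :
    AbsolutelyContinuousOnInterval (φ ∘ f) a b := by
  unfold AbsolutelyContinuousOnInterval at hf ⊢
  refine squeeze_zero' (Eventually.of_forall fun _ ↦ Finset.sum_nonneg fun _ _ ↦ dist_nonneg)
    ?_ (by simpa using hf.const_mul (K : ℝ))
  filter_upwards [mem_inf_of_right (mem_principal_self _)] with E hE
  rw [Finset.mul_sum]
  exact Finset.sum_le_sum fun i hi ↦
    hφ.dist_le_mul _ (hfs (hE.1 i hi).1) _ (hfs (hE.1 i hi).2)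

theorem LocallyLipschitz.comp_absolutelyContinuousOnInterval {X Y : Type*}
    [SeminormedAddCommGroup X] [PseudoMetricSpace Y] {φ : X → Y} {f : ℝ → X} {a b : ℝ}
    (hφ : LocallyLipschitz φ) (hf : AbsolutelyContinuousOnInterval f a b) :
    AbsolutelyContinuousOnInterval (φ ∘ f) a b := by
  have hcpt : IsCompact (f '' uIcc a b) := isCompact_uIcc.image_of_continuousOn hf.continuousOn
  obtain ⟨K, hK⟩ :=
    (hφ.locallyLipschitzOn (s := f '' uIcc a b)).exists_lipschitzOnWith_of_compact hcpt
  exact hK.comp_absolutelyContinuousOnInterval hf (mapsTo_image f _)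

theorem AbsolutelyContinuousOnInterval.const {X : Type*} [PseudoMetricSpace X] (c : X) (a b : ℝ) :
    AbsolutelyContinuousOnInterval (fun _ ↦ c) a b :=
  (LipschitzWith.const c).lipschitzOnWith.absolutelyContinuousOnInterval

theorem le_mul_exp_integral_of_le_add_integral {g y : ℝ → ℝ} {a b K : ℝ} (hab : a ≤ b)
    (hg : IntervalIntegrable g volume a b) (hg0 : ∀ x ∈ Icc a b, 0 ≤ g x)
    (hy : ContinuousOn y (Icc a b))
    (hle : ∀ x ∈ Icc a b, y x ≤ K + ∫ τ in a..x, g τ * y τ) :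
    y b ≤ K * Real.exp (∫ τ in a..b, g τ) := by
  have hab' : uIcc a b = Icc a b := uIcc_of_le hab
  have hgy : IntervalIntegrable (fun x ↦ g x * y x) volume a b :=
    hg.mul_continuousOn (hab' ▸ hy)
  set G : ℝ → ℝ := fun x ↦ ∫ τ in a..x, g τ
  set u : ℝ → ℝ := fun x ↦ K + ∫ τ in a..x, g τ * y τ
  have hGac : AbsolutelyContinuousOnInterval G a b :=
    hg.absolutelyContinuousOnInterval_intervalIntegral (by simp)
  have huac : AbsolutelyContinuousOnInterval u a b :=
    (AbsolutelyContinuousOnInterval.const K a b).add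
      (hgy.absolutelyContinuousOnInterval_intervalIntegral (by simp))
  have hEac : AbsolutelyContinuousOnInterval (fun x ↦ Real.exp (-G x)) a b :=
    (Real.contDiff_exp.comp contDiff_neg).locallyLipschitz.comp_absolutelyContinuousOnInterval
      hGac
  have hderiv : ∀ᵐ x ∂volume.restrict (Icc a b),
      0 ≤ -deriv (fun x ↦ Real.exp (-G x) * u x) x := by
    rw [ae_restrict_iff' measurableSet_Icc]
    filter_upwards [hg.ae_hasDerivAt_integral, hgy.ae_hasDerivAt_integral] with x hGx hux hx
    rw [← hab'] at hx
    have hG : HasDerivAt G (g x) x := hGx hx a left_mem_uIcc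
    have hu : HasDerivAt u (g x * y x) x := (hux hx a left_mem_uIcc).const_add K
    have hw : HasDerivAt (fun x ↦ Real.exp (-G x) * u x)
        (Real.exp (-G x) * -g x * u x + Real.exp (-G x) * (g x * y x)) x :=
      hG.neg.exp.mul hu
    have hyu : y x ≤ u x := hle x (hab' ▸ hx)
    have hgx : 0 ≤ g x := hg0 x (hab' ▸ hx)
    rw [hw.deriv]
    linarith [mul_nonneg (mul_nonneg (Real.exp_pos (-G x)).le hgx) (sub_nonneg.2 hyu)]
  have hmono : Real.exp (-G b) * u b ≤ Real.exp (-G a) * u a := by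
    rw [← sub_nonpos, ← (hEac.fun_mul huac).integral_deriv_eq_sub, ← neg_nonneg,
      ← intervalIntegral.integral_neg]
    exact integral_nonneg_of_ae_restrict hab hderiv
  have hGa : G a = 0 := integral_same
  have hua : u a = K := by simp [u]
  rw [hGa, hua, neg_zero, Real.exp_zero, one_mul, Real.exp_neg,
    inv_mul_le_iff₀ (Real.exp_pos _)] at hmono
  calc y b ≤ u b := hle b (right_mem_Icc.2 hab)
    _ ≤ K * Real.exp (G b) := by linarith

theorem le_add_integral_mul_exp_integral_of_hasDerivAt {g h y y' : ℝ → ℝ} {a b : ℝ} (hab : a ≤ b)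
    (hg : IntervalIntegrable g volume a b) (hh : IntervalIntegrable h volume a b)
    (hg0 : ∀ x ∈ Icc a b, 0 ≤ g x) (hh0 : ∀ x ∈ Icc a b, 0 ≤ h x)
    (hy : ContinuousOn y (Icc a b)) (hderiv : ∀ x ∈ Ioo a b, HasDerivAt y (y' x) x)
    (hineq : ∀ x ∈ Ioo a b, y' x ≤ g x * y x + h x) :
    y b ≤ (y a + ∫ x in a..b, h x) * Real.exp (∫ x in a..b, g x) := by
  refine le_mul_exp_integral_of_le_add_integral hab hg hg0 hy fun x hx ↦ ?_
  have hsub : Icc a x ⊆ Icc a b := Icc_subset_Icc_right hx.2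
  have hgy : IntervalIntegrable (fun τ ↦ g τ * y τ) volume a x :=
    (hg.mono_set (by rw [uIcc_of_le hx.1, uIcc_of_le hab]; exact hsub)).mul_continuousOn
      (by rw [uIcc_of_le hx.1]; exact hy.mono hsub)
  have hhx : IntervalIntegrable h volume a x :=
    hh.mono_set (by rw [uIcc_of_le hx.1, uIcc_of_le hab]; exact hsub)
  have hftc : y x - y a ≤ ∫ τ in a..x, (g τ * y τ + h τ) :=
    sub_le_integral_of_hasDeriv_right_of_le hx.1 (hy.mono hsub)
      (fun τ hτ ↦ (hderiv τ ⟨hτ.1, hτ.2.trans_le hx.2⟩).hasDerivWithinAt)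
      ((intervalIntegrable_iff_integrableOn_Icc_of_le hx.1).1 (hgy.add hhx))
      (fun τ hτ ↦ hineq τ ⟨hτ.1, hτ.2.trans_le hx.2⟩)
  have hhb : ∫ τ in a..x, h τ ≤ ∫ τ in a..b, h τ :=
    integral_mono_interval_of_nonneg le_rfl hx.1 hx.2 hh0 hh
  rw [integral_add hgy hhx] at hftc
  linarith

theorem uniform_gronwall_Icc {g h y y' : ℝ → ℝ} {t α a1 a2 a3 : ℝ} (hα : 0 < α)
    (hg : IntervalIntegrable g volume t (t + α)) (hh : IntervalIntegrable h volume t (t + α))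
    (hy : IntervalIntegrable y volume t (t + α))
    (hg0 : ∀ x ∈ Icc t (t + α), 0 ≤ g x) (hh0 : ∀ x ∈ Icc t (t + α), 0 ≤ h x)
    (hy0 : ∀ x ∈ Icc t (t + α), 0 ≤ y x)
    (hderiv : ∀ x ∈ Icc t (t + α), HasDerivAt y (y' x) x)
    (hineq : ∀ x ∈ Icc t (t + α), y' x ≤ g x * y x + h x)
    (hg_bd : ∫ x in t..(t + α), g x ≤ a1) (hh_bd : ∫ x in t..(t + α), h x ≤ a2)
    (hy_bd : ∫ x in t..(t + α), y x ≤ a3) :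
    y (t + α) ≤ (a3 / α + a2) * Real.exp a1 := by
  set b := t + α
  have htb : t ≤ b := by simp [b, hα.le]
  have hpoint : ∀ s ∈ Icc t b, y b ≤ (y s + a2) * Real.exp a1 := by
    intro s hs
    have hsub : Icc s b ⊆ Icc t b := Icc_subset_Icc_left hs.1
    have hsub' : uIcc s b ⊆ uIcc t b := by rwa [uIcc_of_le hs.2, uIcc_of_le htb]
    have hh_le : ∫ x in s..b, h x ≤ a2 :=
      (integral_mono_interval_of_nonneg hs.1 hs.2 le_rfl hh0 hh).trans hh_bd
    have hg_le : ∫ x in s..b, g x ≤ a1 :=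
      (integral_mono_interval_of_nonneg hs.1 hs.2 le_rfl hg0 hg).trans hg_bd
    calc y b ≤ (y s + ∫ x in s..b, h x) * Real.exp (∫ x in s..b, g x) :=
          le_add_integral_mul_exp_integral_of_hasDerivAt hs.2 (hg.mono_set hsub')
            (hh.mono_set hsub') (fun x hx ↦ hg0 x (hsub hx)) (fun x hx ↦ hh0 x (hsub hx))
            (fun x hx ↦ (hderiv x (hsub hx)).continuousAt.continuousWithinAt)
            (fun x hx ↦ hderiv x (hsub (Ioo_subset_Icc_self hx)))
            (fun x hx ↦ hineq x (hsub (Ioo_subset_Icc_self hx)))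
      _ ≤ (y s + a2) * Real.exp a1 := by
          have : 0 ≤ y s + a2 := by
            linarith [hy0 s hs, integral_nonneg (μ := volume) hs.2
              fun x hx ↦ hh0 x (hsub hx)]
          gcongr
  have havg : α * y b ≤ (a3 + α * a2) * Real.exp a1 :=
    calc α * y b = ∫ _ in t..b, y b := by simp [b]
      _ ≤ ∫ s in t..b, (y s + a2) * Real.exp a1 :=
          integral_mono_on htb intervalIntegrable_const
            ((hy.add intervalIntegrable_const).mul_const _) hpoint
      _ = ((∫ s in t..b, y s) + α * a2) * Real.exp a1 := by
          rw [intervalIntegral.integral_mul_const,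
            integral_add hy intervalIntegrable_const]
          simp [b]
      _ ≤ (a3 + α * a2) * Real.exp a1 := by gcongr
  rw [div_add' _ _ _ hα.ne', div_mul_eq_mul_div, le_div_iff₀ hα]
  linarith

theorem uniform_gronwall_general
    (t0 t1 α a1 a2 a3 : ℝ) (g h y y' : ℝ → ℝ)
    (hα : 0 < α)
    (hg_pos : ∀ t ∈ Set.Ioo t0 t1, 0 < g t)
    (hh_pos : ∀ t ∈ Set.Ioo t0 t1, 0 < h t)
    (hy_pos : ∀ t ∈ Set.Ioo t0 t1, 0 < y t)
    (hg_int : LocallyIntegrableOn g (Set.Ioo t0 t1))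
    (hh_int : LocallyIntegrableOn h (Set.Ioo t0 t1))
    (hy_int : LocallyIntegrableOn y (Set.Ioo t0 t1))
    (hderiv : ∀ t ∈ Set.Ioo t0 t1, HasDerivAt y (y' t) t)
    (hineq : ∀ t ∈ Set.Ioo t0 t1, y' t ≤ g t * y t + h t)
    (hg_bd : ∀ t : ℝ, t0 ≤ t → t + α < t1 → (∫ τ in t..(t + α), g τ) ≤ a1)
    (hh_bd : ∀ t : ℝ, t0 ≤ t → t + α < t1 → (∫ τ in t..(t + α), h τ) ≤ a2)
    (hy_bd : ∀ t : ℝ, t0 ≤ t → t + α < t1 → (∫ τ in t..(t + α), y τ) ≤ a3) :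
    ∀ t : ℝ, t0 ≤ t → t + α < t1 → y (t + α) ≤ (a3 / α + a2) * Real.exp a1 := by
  have interior_case : ∀ t, t0 < t → t + α < t1 → y (t + α) ≤ (a3 / α + a2) * Real.exp a1 := by
    intro t ht0 htα
    have hI : Icc t (t + α) ⊆ Ioo t0 t1 := fun x hx ↦ ⟨ht0.trans_le hx.1, hx.2.trans_lt htα⟩
    have hint {f : ℝ → ℝ} (hf : LocallyIntegrableOn f (Ioo t0 t1)) :
        IntervalIntegrable f volume t (t + α) :=
      (intervalIntegrable_iff_integrableOn_Icc_of_le (by linarith)).2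
        (hf.integrableOn_compact_subset hI isCompact_Icc)
    exact uniform_gronwall_Icc hα (hint hg_int) (hint hh_int) (hint hy_int)
      (fun x hx ↦ (hg_pos x (hI hx)).le) (fun x hx ↦ (hh_pos x (hI hx)).le)
      (fun x hx ↦ (hy_pos x (hI hx)).le) (fun x hx ↦ hderiv x (hI hx))
      (fun x hx ↦ hineq x (hI hx)) (hg_bd t ht0.le htα) (hh_bd t ht0.le htα) (hy_bd t ht0.le htα)
  intro t ht0 htα
  rcases ht0.eq_or_lt with rfl | ht0
  · -- `g`, `h` need not be integrable near `t0`, so approach `t0 + α` from the right instead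
    have hlim : Tendsto y (𝓝[>] (t0 + α)) (𝓝 (y (t0 + α))) :=
      (hderiv _ ⟨by linarith, htα⟩).continuousAt.tendsto.mono_left nhdsWithin_le_nhds
    refine le_of_tendsto hlim ?_
    filter_upwards [Ioo_mem_nhdsGT htα] with u hu
    simpa using interior_case (u - α) (by linarith [hu.1]) (by linarith [hu.2])
  · exact interior_case t ht0 htα

/-- Uniform Gronwall Lemma. -/
theorem uniform_gronwall
    (t0 t1 α a1 a2 a3 : ℝ) (g h y y' : ℝ → ℝ)
    (ht : t0 < t1) (hα : 0 < α) (ha1 : 0 < a1) (ha2 : 0 < a2) (ha3 : 0 < a3)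
    (hg_pos : ∀ t ∈ Set.Ioo t0 t1, 0 < g t)
    (hh_pos : ∀ t ∈ Set.Ioo t0 t1, 0 < h t)
    (hy_pos : ∀ t ∈ Set.Ioo t0 t1, 0 < y t)
    (hg_int : LocallyIntegrableOn g (Set.Ioo t0 t1))
    (hh_int : LocallyIntegrableOn h (Set.Ioo t0 t1))
    (hy_int : LocallyIntegrableOn y (Set.Ioo t0 t1))
    (hderiv : ∀ t ∈ Set.Ioo t0 t1, HasDerivAt y (y' t) t)
    (hineq : ∀ t ∈ Set.Ioo t0 t1, y' t ≤ g t * y t + h t)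
    (hg_bd : ∀ t : ℝ, t0 ≤ t → t + α < t1 → (∫ τ in t..(t + α), g τ) ≤ a1)
    (hh_bd : ∀ t : ℝ, t0 ≤ t → t + α < t1 → (∫ τ in t..(t + α), h τ) ≤ a2)
    (hy_bd : ∀ t : ℝ, t0 ≤ t → t + α < t1 → (∫ τ in t..(t + α), y τ) ≤ a3) :
    ∀ t : ℝ, t0 ≤ t → t + α < t1 → y (t + α) ≤ (a3 / α + a2) * Real.exp a1 :=
  uniform_gronwall_general t0 t1 α a1 a2 a3 g h y y' hα hg_pos hh_pos hy_pos hg_int hh_int hy_int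
    hderiv hineq hg_bd hh_bd hy_bd
end

section
/- Convex combination formula for the determining form: let X be a real Banach space, a ∈ X, S ∈ (0, ∞], and q : X → ℝ a continuous function. If v : [0, S) → X is differentiable and satisfies v'(s) = −q(v(s))²·(v(s) − a) for all s ∈ [0, S), then v(s) = β(s)·v(0) + (1 − β(s))·a for all s ∈ [0, S), where β(s) = exp(−∫_0^s q(v(τ))² dτ). In particular every value v(s) lies on the line segment between v(0) and a, and β(s) ∈ (0, 1] is nonincreasing in s. -/
/-!
With `G(t) = ∫₀ᵗ q(v τ)² dτ`, the integrating factor makes `t ↦ exp (G t) • (v t - a)` have zero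
derivative, so it is constant, equal to `v 0 - a`. Solving for `v s` gives the convex combination
with weight `β s = exp (-G s)`, which lies in `(0, 1]` and is nonincreasing because the integrand
is nonnegative.
-/

open Set intervalIntegral

theorem ContinuousOn.hasDerivWithinAt_integral_Icc {E : Type*} [NormedAddCommGroup E]
    [NormedSpace ℝ E] [CompleteSpace E] {f : ℝ → E} {a b x : ℝ}
    (hf : ContinuousOn f (Icc a b)) (hx : x ∈ Icc a b) :
    HasDerivWithinAt (fun u => ∫ t in a..u, f t) (f x) (Icc a b) x := by
  have : Fact (x ∈ Icc a b) := ⟨hx⟩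
  exact integral_hasDerivWithinAt_right
    ((hf.mono (Icc_subset_Icc_right hx.2)).intervalIntegrable_of_Icc hx.1)
    (hf.stronglyMeasurableAtFilter_nhdsWithin measurableSet_Icc x) (hf x hx)

theorem eq_inv_smul_add_one_sub_inv_smul_of_smul_sub_eq {𝕜 X : Type*} [Field 𝕜]
    [AddCommGroup X] [Module 𝕜 X] {c : 𝕜} {x y a : X} (hc : c ≠ 0) (h : c • (y - a) = x - a) :
    y = c⁻¹ • x + (1 - c⁻¹) • a := by
  have hy : y - a = c⁻¹ • (x - a) := (eq_inv_smul_iff₀ hc).2 h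
  rw [sub_eq_iff_eq_add.1 hy]
  module

theorem exp_integral_smul_sub_eq_of_hasDerivWithinAt {X : Type*} [NormedAddCommGroup X]
    [NormedSpace ℝ X] {g : ℝ → ℝ} {v : ℝ → X} {a : X} {r s : ℝ} (hrs : r ≤ s)
    (hg : ContinuousOn g (Icc r s))
    (hv : ∀ t ∈ Icc r s, HasDerivWithinAt v (-g t • (v t - a)) (Icc r s) t) :
    Real.exp (∫ τ in r..s, g τ) • (v s - a) = v r - a := by
  set w : ℝ → X := fun t => Real.exp (∫ τ in r..t, g τ) • (v t - a)
  have hw : ∀ t ∈ Icc r s, HasDerivWithinAt w 0 (Icc r s) t := by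
    intro t ht
    have := ((hg.hasDerivWithinAt_integral_Icc ht).exp).smul ((hv t ht).sub_const a)
    refine this.congr_deriv ?_
    rw [smul_smul, ← add_smul, mul_neg, neg_add_cancel, zero_smul]
  have hw_cont : ContinuousOn w (Icc r s) := fun t ht => (hw t ht).continuousWithinAt
  have hw_right : ∀ t ∈ Ico r s, HasDerivWithinAt w 0 (Ici t) t := fun t ht =>
    (hw t (Ico_subset_Icc_self ht)).mono_of_mem_nhdsWithin (Icc_mem_nhdsGE_of_mem ht)
  simpa [w] using constant_of_has_deriv_right_zero hw_cont hw_right s (right_mem_Icc.2 hrs)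

theorem detform_convex_combination_general
    {X : Type*} [NormedAddCommGroup X] [NormedSpace ℝ X]
    (a : X) (S : EReal) (q : X → ℝ) (hq : Continuous q)
    (v : ℝ → X)
    (hv : ∀ s : ℝ, 0 ≤ s → (s : EReal) < S →
      HasDerivAt v ((-(q (v s) ^ 2)) • (v s - a)) s) :
    (∀ s : ℝ, 0 ≤ s → (s : EReal) < S →
      v s = Real.exp (-(∫ τ in (0:ℝ)..s, q (v τ) ^ 2)) • v 0
          + (1 - Real.exp (-(∫ τ in (0:ℝ)..s, q (v τ) ^ 2))) • a
        ∧ Real.exp (-(∫ τ in (0:ℝ)..s, q (v τ) ^ 2)) ∈ Set.Ioc (0:ℝ) 1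
        ∧ v s ∈ segment ℝ (v 0) a)
    ∧ (∀ s1 s2 : ℝ, 0 ≤ s1 → s1 ≤ s2 → (s2 : EReal) < S →
        Real.exp (-(∫ τ in (0:ℝ)..s2, q (v τ) ^ 2))
          ≤ Real.exp (-(∫ τ in (0:ℝ)..s1, q (v τ) ^ 2))) := by
  have hv_Icc : ∀ s : ℝ, (s : EReal) < S → ∀ t ∈ Icc 0 s,
      HasDerivWithinAt v ((-(q (v t) ^ 2)) • (v t - a)) (Icc 0 s) t := fun s hsS t ht =>
    (hv t ht.1 ((EReal.coe_le_coe_iff.2 ht.2).trans_lt hsS)).hasDerivWithinAt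
  have hg : ∀ s : ℝ, (s : EReal) < S → ContinuousOn (fun τ => q (v τ) ^ 2) (Icc 0 s) :=
    fun s hsS => (hq.comp_continuousOn fun t ht => (hv_Icc s hsS t ht).continuousWithinAt).pow 2
  set β : ℝ → ℝ := fun s => Real.exp (-(∫ τ in (0:ℝ)..s, q (v τ) ^ 2)) with hβ
  have hβ_mem : ∀ s : ℝ, 0 ≤ s → β s ∈ Ioc 0 1 := fun s hs =>
    ⟨Real.exp_pos _, Real.exp_le_one_iff.2 <| neg_nonpos.2 <|
      integral_nonneg hs fun _ _ => sq_nonneg _⟩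
  have hformula : ∀ s : ℝ, 0 ≤ s → (s : EReal) < S → v s = β s • v 0 + (1 - β s) • a := by
    intro s hs hsS
    have key := exp_integral_smul_sub_eq_of_hasDerivWithinAt hs (hg s hsS) (hv_Icc s hsS)
    simpa only [hβ, Real.exp_neg] using
      eq_inv_smul_add_one_sub_inv_smul_of_smul_sub_eq (Real.exp_pos _).ne' key
  refine ⟨fun s hs hsS => ⟨hformula s hs hsS, hβ_mem s hs, ?_⟩, ?_⟩
  · exact ⟨β s, 1 - β s, (hβ_mem s hs).1.le, sub_nonneg.2 (hβ_mem s hs).2, by ring,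
      (hformula s hs hsS).symm⟩
  · intro s1 s2 hs1 h12 hs2S
    exact Real.exp_le_exp.2 <| neg_le_neg <| integral_mono_interval le_rfl hs1 h12
      (Filter.Eventually.of_forall fun _ => sq_nonneg _)
      ((hg s2 hs2S).intervalIntegrable_of_Icc (hs1.trans h12))

/-- Convex combination formula for the determining form. -/
theorem detform_convex_combination
    {X : Type*} [NormedAddCommGroup X] [NormedSpace ℝ X] [CompleteSpace X]
    (a : X) (S : EReal) (hS : 0 < S) (q : X → ℝ) (hq : Continuous q)
    (v : ℝ → X)
    (hv : ∀ s : ℝ, 0 ≤ s → (s : EReal) < S →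
      HasDerivAt v ((-(q (v s) ^ 2)) • (v s - a)) s) :
    (∀ s : ℝ, 0 ≤ s → (s : EReal) < S →
      v s = Real.exp (-(∫ τ in (0:ℝ)..s, q (v τ) ^ 2)) • v 0
          + (1 - Real.exp (-(∫ τ in (0:ℝ)..s, q (v τ) ^ 2))) • a
        ∧ Real.exp (-(∫ τ in (0:ℝ)..s, q (v τ) ^ 2)) ∈ Set.Ioc (0:ℝ) 1
        ∧ v s ∈ segment ℝ (v 0) a)
    ∧ (∀ s1 s2 : ℝ, 0 ≤ s1 → s1 ≤ s2 → (s2 : EReal) < S →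
        Real.exp (-(∫ τ in (0:ℝ)..s2, q (v τ) ^ 2))
          ≤ Real.exp (-(∫ τ in (0:ℝ)..s1, q (v τ) ^ 2))) :=
  detform_convex_combination_general a S q hq v hv
end

section
/- Dissipativity of the determining form: let X be a real Banach space, ρ > 0, a ∈ X with ‖a‖ ≤ ρ, G : X → X Lipschitz on B̄(0, ρ), and F(v) = −‖v − G(v)‖²·(v − a). If S ∈ (0, ∞] and v : [0, S) → B̄(0, ρ) is differentiable with v'(s) = F(v(s)) for all s, then ‖v(s) − a‖ = exp(−∫_0^s ‖v(τ) − G(v(τ))‖² dτ)·‖v(0) − a‖ for all s ∈ [0, S); in particular s ↦ ‖v(s) − a‖ is nonincreasing, so every closed ball centered at a is forward invariant: if ‖v(0) − a‖ ≤ r then ‖v(s) − a‖ ≤ r for all s ∈ [0, S). -/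
/-- Dissipativity of the determining form. -/
theorem detform_dissipativity
    {X : Type*} [NormedAddCommGroup X] [NormedSpace ℝ X] [CompleteSpace X]
    (ρ : ℝ) (hρ : 0 < ρ) (a : X) (ha : ‖a‖ ≤ ρ)
    (G : X → X) (K : NNReal) (hG : LipschitzOnWith K G (Metric.closedBall 0 ρ))
    (S : EReal) (hS : 0 < S) (v : ℝ → X)
    (hvball : ∀ s : ℝ, 0 ≤ s → (s : EReal) < S → v s ∈ Metric.closedBall (0:X) ρ)
    (hv : ∀ s : ℝ, 0 ≤ s → (s : EReal) < S →
      HasDerivAt v ((-(‖v s - G (v s)‖ ^ 2)) • (v s - a)) s) :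
    (∀ s : ℝ, 0 ≤ s → (s : EReal) < S →
      ‖v s - a‖ = Real.exp (-(∫ τ in (0:ℝ)..s, ‖v τ - G (v τ)‖ ^ 2)) * ‖v 0 - a‖)
    ∧ (∀ s1 s2 : ℝ, 0 ≤ s1 → s1 ≤ s2 → (s2 : EReal) < S → ‖v s2 - a‖ ≤ ‖v s1 - a‖)
    ∧ (∀ r : ℝ, ‖v 0 - a‖ ≤ r →
        ∀ s : ℝ, 0 ≤ s → (s : EReal) < S → ‖v s - a‖ ≤ r) := by
  set c : ℝ → ℝ := fun τ => ‖v τ - G (v τ)‖ ^ 2 with hc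
  have main : ∀ t : ℝ, 0 ≤ t → (t : EReal) < S →
      (∀ s ∈ Set.Icc (0:ℝ) t,
        ‖v s - a‖ = Real.exp (-(∫ τ in (0:ℝ)..s, c τ)) * ‖v 0 - a‖) ∧
      (∀ s1 s2 : ℝ, s1 ∈ Set.Icc (0:ℝ) t → s2 ∈ Set.Icc (0:ℝ) t → s1 ≤ s2 →
        (∫ τ in (0:ℝ)..s1, c τ) ≤ ∫ τ in (0:ℝ)..s2, c τ) := by
    intro t ht0 htS
    -- facts for τ ∈ [0, t]
    have hmem : ∀ τ ∈ Set.Icc (0:ℝ) t, (τ : EReal) < S := by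
      intro τ hτ
      exact lt_of_le_of_lt (EReal.coe_le_coe_iff.mpr hτ.2) htS
    have hvd : ∀ τ ∈ Set.Icc (0:ℝ) t,
        HasDerivAt v ((-(‖v τ - G (v τ)‖ ^ 2)) • (v τ - a)) τ :=
      fun τ hτ => hv τ hτ.1 (hmem τ hτ)
    have hvc : ContinuousOn v (Set.Icc 0 t) :=
      fun τ hτ => (hvd τ hτ).continuousAt.continuousWithinAt
    -- projection onto [0, t]
    set p : ℝ → ℝ := fun τ => max 0 (min τ t) with hp
    have hpc : Continuous p := by fun_prop
    have hpmem : ∀ τ, p τ ∈ Set.Icc (0:ℝ) t := by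
      intro τ
      constructor
      · exact le_max_left _ _
      · exact max_le (by exact ht0) (min_le_right _ _)
    have hpeq : ∀ τ ∈ Set.Icc (0:ℝ) t, p τ = τ := by
      intro τ hτ
      simp [hp, min_eq_left hτ.2, max_eq_right hτ.1]
    set w : ℝ → X := fun τ => v (p τ) with hw
    have hwc : Continuous w := hvc.comp_continuous hpc hpmem
    have hwball : ∀ τ, w τ ∈ Metric.closedBall (0:X) ρ := by
      intro τ
      exact hvball (p τ) (hpmem τ).1 (hmem (p τ) (hpmem τ))
    set ct : ℝ → ℝ := fun τ => ‖w τ - G (w τ)‖ ^ 2 with hct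
    have hctc : Continuous ct := by
      have hGw : Continuous (fun τ => G (w τ)) :=
        hG.continuousOn.comp_continuous hwc hwball
      exact (continuous_norm.comp (hwc.sub hGw)).pow 2
    have hcteq : ∀ τ ∈ Set.Icc (0:ℝ) t, ct τ = c τ := by
      intro τ hτ
      simp [hct, hw, hpeq τ hτ, hc]
    have hctnn : ∀ τ, 0 ≤ ct τ := fun τ => sq_nonneg _
    -- integral of ct
    set I : ℝ → ℝ := fun τ => ∫ x in (0:ℝ)..τ, ct x with hI
    have hIint : ∀ u1 u2 : ℝ, IntervalIntegrable ct MeasureTheory.volume u1 u2 :=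
      fun u1 u2 => hctc.intervalIntegrable u1 u2
    have hId : ∀ x : ℝ, HasDerivAt I (ct x) x := by
      intro x
      exact intervalIntegral.integral_hasDerivAt_right (hIint 0 x)
        (hctc.stronglyMeasurableAtFilter _ _) hctc.continuousAt
    have hIc : Continuous I := by
      rw [continuous_iff_continuousAt]; exact fun x => (hId x).continuousAt
    have hIeq : ∀ s ∈ Set.Icc (0:ℝ) t, I s = ∫ τ in (0:ℝ)..s, c τ := by
      intro s hs
      apply intervalIntegral.integral_congr
      intro τ hτ
      rw [Set.uIcc_of_le hs.1] at hτ
      exact hcteq τ ⟨hτ.1, hτ.2.trans hs.2⟩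
    -- the key constancy
    have key : ∀ s ∈ Set.Icc (0:ℝ) t,
        Real.exp (I s) • (v s - a) = v 0 - a := by
      intro s hs
      have hcont : ContinuousOn (fun τ => Real.exp (I τ) • (v τ - a)) (Set.Icc 0 s) := by
        apply ContinuousOn.smul
        · exact (Real.continuous_exp.comp hIc).continuousOn
        · exact (hvc.mono (Set.Icc_subset_Icc le_rfl hs.2)).sub continuousOn_const
      have hder : ∀ x ∈ Set.Ico (0:ℝ) s,
          HasDerivWithinAt (fun τ => Real.exp (I τ) • (v τ - a)) 0 (Set.Ici x) x := by
        intro x hx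
        have hxm : x ∈ Set.Icc (0:ℝ) t := ⟨hx.1, hx.2.le.trans hs.2⟩
        have h1 : HasDerivAt (fun τ => Real.exp (I τ)) (Real.exp (I x) * ct x) x :=
          (hId x).exp
        have h2 : HasDerivAt (fun τ => v τ - a)
            ((-(‖v x - G (v x)‖ ^ 2)) • (v x - a)) x := (hvd x hxm).sub_const a
        have h3 := h1.smul h2
        have hz : (Real.exp (I x) * ct x) • (v x - a) +
            Real.exp (I x) • ((-(‖v x - G (v x)‖ ^ 2)) • (v x - a)) = 0 := by
          have hcx : ct x = ‖v x - G (v x)‖ ^ 2 := hcteq x hxm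
          rw [hcx, smul_smul, ← add_smul]
          have : Real.exp (I x) * ‖v x - G (v x)‖ ^ 2 +
              Real.exp (I x) * -(‖v x - G (v x)‖ ^ 2) = 0 := by ring
          rw [this, zero_smul]
        rw [add_comm, hz] at h3
        exact h3.hasDerivWithinAt
      have := constant_of_has_deriv_right_zero hcont hder s
        (Set.right_mem_Icc.mpr hs.1)
      simpa [hI, intervalIntegral.integral_same] using this
    constructor
    · intro s hs
      have h := key s hs
      have hn := congrArg norm h
      rw [norm_smul, Real.norm_eq_abs, abs_of_pos (Real.exp_pos _)] at hn
      have hexp : Real.exp (I s) ≠ 0 := (Real.exp_pos _).ne'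
      rw [← hIeq s hs]
      rw [Real.exp_neg]
      field_simp
      linarith [hn]
    · intro s1 s2 hs1 hs2 h12
      rw [← hIeq s1 hs1, ← hIeq s2 hs2]
      have hadd := intervalIntegral.integral_add_adjacent_intervals
        (hIint 0 s1) (hIint s1 s2)
      have hnn : 0 ≤ ∫ x in s1..s2, ct x :=
        intervalIntegral.integral_nonneg h12 (fun x _ => hctnn x)
      simp only [hI]
      linarith [hadd]
  refine ⟨?_, ?_, ?_⟩
  · intro s hs0 hsS
    exact (main s hs0 hsS).1 s (Set.right_mem_Icc.mpr hs0)
  · intro s1 s2 hs1 h12 hs2S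
    obtain ⟨m1, m2⟩ := main s2 (hs1.trans h12) hs2S
    have e1 := m1 s1 ⟨hs1, h12⟩
    have e2 := m1 s2 (Set.right_mem_Icc.mpr (hs1.trans h12))
    rw [e1, e2]
    have hmono := m2 s1 s2 ⟨hs1, h12⟩ (Set.right_mem_Icc.mpr (hs1.trans h12)) h12
    have := Real.exp_le_exp.mpr (neg_le_neg hmono)
    exact mul_le_mul_of_nonneg_right this (norm_nonneg _)
  · intro r hr s hs0 hsS
    obtain ⟨m1, m2⟩ := main s hs0 hsS
    have e := m1 s (Set.right_mem_Icc.mpr hs0)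
    rw [e]
    have hnn : 0 ≤ ∫ τ in (0:ℝ)..s, c τ := by
      have := m2 0 s (Set.left_mem_Icc.mpr hs0) (Set.right_mem_Icc.mpr hs0) hs0
      simpa using this
    have hexp : Real.exp (-(∫ τ in (0:ℝ)..s, c τ)) ≤ 1 := by
      rw [Real.exp_le_one_iff]
      linarith
    calc Real.exp (-(∫ τ in (0:ℝ)..s, c τ)) * ‖v 0 - a‖
        ≤ 1 * ‖v 0 - a‖ := mul_le_mul_of_nonneg_right hexp (norm_nonneg _)
      _ = ‖v 0 - a‖ := one_mul _
      _ ≤ r := hr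
end

section
/- Global existence for the determining form: let X be a real Banach space, R > 0, a ∈ X with ‖a‖ ≤ R, set ρ = 4R, and let G : X → X be Lipschitz on the closed ball B̄(0, ρ). Define F(v) = −‖v − G(v)‖²·(v − a). Then for every v0 ∈ B̄(a, 3R) = {x ∈ X : ‖x − a‖ ≤ 3R} there exists a unique differentiable curve v : [0, ∞) → X with v(0) = v0, v'(s) = F(v(s)) for all s ≥ 0, and v(s) ∈ B̄(a, 3R) for all s ≥ 0. -/
/-!
The field is radial, `F v = ψ v • (v - a)` with `ψ v = -‖v - G v‖² ≤ 0`, and Lipschitz on the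
bounded ball `B̄(a, 3R) ⊆ B̄(0, ρ)`. Precomposing with the 2-Lipschitz radial retraction onto this
ball gives a bounded, globally Lipschitz field, whose local Picard–Lindelöf solutions on `[0, n]`
glue, by uniqueness, to a solution on `[0, ∞)`. The extended field is still radial with a
nonpositive coefficient `μ`, so for `J' = -μ ∘ v` the curve `exp J • (v - a)` is constant: the
distance to `a` does not increase, the solution never leaves the ball, and there it solves the
original equation. Uniqueness is Lipschitz uniqueness on the ball.
-/

open Set Metric Bornology
open scoped NNReal

theorem LipschitzOnWith.isBounded_image {α β : Type*} [PseudoMetricSpace α] [PseudoMetricSpace β]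
    {K : ℝ≥0} {f : α → β} {s : Set α} (hf : LipschitzOnWith K f s) (hs : IsBounded s) :
    IsBounded (f '' s) := by
  rw [← Set.range_domRestrict]
  have : IsBounded (univ : Set s) := isBounded_induced.2 (by simpa using hs)
  simpa using hf.to_restrict.isBounded_image this

section SMul

variable {α E : Type*} [PseudoMetricSpace α] [SeminormedAddCommGroup E] [NormedSpace ℝ E]

theorem LipschitzOnWith.smul_of_norm_le {s : Set α} {f : α → ℝ} {g : α → E} {Kf Kg Mf Mg : ℝ≥0}
    (hf : LipschitzOnWith Kf f s) (hg : LipschitzOnWith Kg g s)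
    (hfM : ∀ x ∈ s, ‖f x‖ ≤ Mf) (hgM : ∀ x ∈ s, ‖g x‖ ≤ Mg) :
    LipschitzOnWith (Mf * Kg + Kf * Mg) (fun x ↦ f x • g x) s := by
  refine LipschitzOnWith.of_dist_le_mul fun x hx y hy ↦ ?_
  rw [dist_eq_norm]
  calc ‖f x • g x - f y • g y‖ = ‖f x • (g x - g y) + (f x - f y) • g y‖ := by
        congr 1; module
    _ ≤ ‖f x‖ * ‖g x - g y‖ + ‖f x - f y‖ * ‖g y‖ := by
        grw [norm_add_le, norm_smul, norm_smul]
    _ ≤ Mf * (Kg * dist x y) + Kf * dist x y * Mg := by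
        rw [← dist_eq_norm, ← dist_eq_norm]
        gcongr
        exacts [hfM x hx, hg.dist_le_mul x hx y hy, hf.dist_le_mul x hx y hy, hgM y hy]
    _ = (Mf * Kg + Kf * Mg : ℝ≥0) * dist x y := by push_cast; ring

theorem LipschitzOnWith.exists_lipschitzOnWith_smul {s : Set α} {f : α → ℝ} {g : α → E}
    {Kf Kg : ℝ≥0} (hs : IsBounded s) (hf : LipschitzOnWith Kf f s) (hg : LipschitzOnWith Kg g s) :
    ∃ K, LipschitzOnWith K (fun x ↦ f x • g x) s := by
  obtain ⟨Mf, hMf⟩ := isBounded_iff_forall_norm_le.1 (hf.isBounded_image hs)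
  obtain ⟨Mg, hMg⟩ := isBounded_iff_forall_norm_le.1 (hg.isBounded_image hs)
  exact ⟨_, hf.smul_of_norm_le hg (Mf := Mf.toNNReal) (Mg := Mg.toNNReal)
    (fun x hx ↦ (hMf _ (mem_image_of_mem f hx)).trans (Real.le_coe_toNNReal Mf))
    (fun x hx ↦ (hMg _ (mem_image_of_mem g hx)).trans (Real.le_coe_toNNReal Mg))⟩

end SMul

section Normed

variable {E : Type*} [NormedAddCommGroup E] [NormedSpace ℝ E]

theorem LipschitzOnWith.exists_lipschitzOnWith_neg_sq_norm_sub_smul_sub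
    {G : E → E} {K : ℝ≥0} {s : Set E} (hs : IsBounded s) (hG : LipschitzOnWith K G s) (a : E) :
    ∃ K', LipschitzOnWith K' (fun x ↦ (-(‖x - G x‖ ^ 2)) • (x - a)) s := by
  have hres : LipschitzOnWith (1 * (1 + K)) (fun x ↦ ‖x - G x‖) s :=
    lipschitzWith_one_norm.comp_lipschitzOnWith (LipschitzWith.id.lipschitzOnWith.sub hG)
  obtain ⟨K₁, hsq⟩ := hres.exists_lipschitzOnWith_smul hs hres
  obtain ⟨K₂, h⟩ := hsq.neg.exists_lipschitzOnWith_smul hs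
    (LipschitzWith.id.sub (LipschitzWith.const a)).lipschitzOnWith
  exact ⟨K₂, by simpa only [Pi.neg_apply, id, smul_eq_mul, ← sq] using h⟩

section RadialRetraction

variable {a : E} {r : ℝ}

noncomputable def radialRetraction (a : E) (r : ℝ) (x : E) : E :=
  a + (r / max ‖x - a‖ r) • (x - a)

theorem radialRetraction_sub_center (a : E) (r : ℝ) (x : E) :
    radialRetraction a r x - a = (r / max ‖x - a‖ r) • (x - a) :=
  add_sub_cancel_left _ _

theorem radialRetraction_of_mem_closedBall (hr : 0 < r) {x : E} (hx : x ∈ closedBall a r) :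
    radialRetraction a r x = x := by
  rw [mem_closedBall, dist_eq_norm] at hx
  simp [radialRetraction, max_eq_right hx, hr.ne']

theorem radialRetraction_mem_closedBall (hr : 0 < r) (x : E) :
    radialRetraction a r x ∈ closedBall a r := by
  have hm : 0 < max ‖x - a‖ r := lt_max_of_lt_right hr
  rw [mem_closedBall, dist_eq_norm, radialRetraction_sub_center, norm_smul,
    Real.norm_of_nonneg (by positivity), div_mul_eq_mul_div, div_le_iff₀ hm]
  exact mul_le_mul_of_nonneg_left (le_max_left _ _) hr.le

theorem lipschitzWith_radialRetraction (hr : 0 < r) :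
    LipschitzWith 2 (radialRetraction a r) := by
  refine LipschitzWith.of_dist_le_mul fun x y ↦ ?_
  set m : E → ℝ := fun z ↦ max ‖z - a‖ r
  have hm : ∀ z, r ≤ m z := fun z ↦ le_max_right _ _
  have hm_pos : ∀ z, 0 < m z := fun z ↦ hr.trans_le (hm z)
  have hm_dist : |m x - m y| ≤ ‖x - y‖ := by
    calc |m x - m y| ≤ |‖x - a‖ - ‖y - a‖| := abs_max_sub_max_le_abs _ _ _
      _ ≤ ‖(x - a) - (y - a)‖ := abs_norm_sub_norm_le _ _
      _ = ‖x - y‖ := by rw [sub_sub_sub_cancel_right]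
  -- the change of scale is controlled because `‖y - a‖ ≤ m y` and `r ≤ m x`
  have hscale : |r / m x - r / m y| * ‖y - a‖ ≤ ‖x - y‖ := by
    have hx : r / m x ≤ 1 := div_le_one_of_le₀ (hm x) (hm_pos x).le
    have hy : ‖y - a‖ / m y ≤ 1 := div_le_one_of_le₀ (le_max_left _ _) (hm_pos y).le
    calc |r / m x - r / m y| * ‖y - a‖ = r / m x * |m x - m y| * (‖y - a‖ / m y) := by
          rw [show r / m x - r / m y = r / m x * ((m y - m x) / m y) by
              field_simp [(hm_pos x).ne', (hm_pos y).ne'],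
            abs_mul, abs_of_pos (div_pos hr (hm_pos x)), abs_div, abs_of_pos (hm_pos y),
            abs_sub_comm]
          ring
      _ ≤ 1 * ‖x - y‖ * 1 := by gcongr
      _ = ‖x - y‖ := by ring
  rw [dist_eq_norm, dist_eq_norm]
  calc ‖radialRetraction a r x - radialRetraction a r y‖
      = ‖(r / m x) • (x - y) + (r / m x - r / m y) • (y - a)‖ := by
        simp only [radialRetraction, m]; congr 1; module
    _ ≤ |r / m x| * ‖x - y‖ + |r / m x - r / m y| * ‖y - a‖ := by
        grw [norm_add_le, norm_smul, norm_smul, Real.norm_eq_abs, Real.norm_eq_abs]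
    _ ≤ 1 * ‖x - y‖ + ‖x - y‖ := by
        gcongr
        rw [abs_of_pos (div_pos hr (hm_pos x)), div_le_one (hm_pos x)]
        exact hm x
    _ = (2 : ℝ≥0) * ‖x - y‖ := by push_cast; ring

end RadialRetraction

theorem IsIntegralCurveOn.eqOn_Icc_of_lipschitzOnWith {f : E → E} {s : Set E} {K : ℝ≥0}
    (hf : LipschitzOnWith K f s) {u v : ℝ → E} {a b : ℝ}
    (hu : IsIntegralCurveOn u (fun _ ↦ f) (Icc a b)) (hus : MapsTo u (Icc a b) s)
    (hv : IsIntegralCurveOn v (fun _ ↦ f) (Icc a b)) (hvs : MapsTo v (Icc a b) s)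
    (ha : u a = v a) : EqOn u v (Icc a b) :=
  ODE_solution_unique_of_mem_Icc_right (fun _ _ ↦ hf) hu.continuousOn
    (fun t ht ↦ (hu t (Ico_subset_Icc_self ht)).mono_of_mem_nhdsWithin (Icc_mem_nhdsGE_of_mem ht))
    (fun _ ht ↦ hus (Ico_subset_Icc_self ht)) hv.continuousOn
    (fun t ht ↦ (hv t (Ico_subset_Icc_self ht)).mono_of_mem_nhdsWithin (Icc_mem_nhdsGE_of_mem ht))
    (fun _ ht ↦ hvs (Ico_subset_Icc_self ht)) ha

theorem exists_isIntegralCurveOn_Ici_of_lipschitzWith [CompleteSpace E] {f : E → E} {K C : ℝ≥0}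
    (hf : LipschitzWith K f) (hC : ∀ x, ‖f x‖ ≤ C) (x₀ : E) :
    ∃ v : ℝ → E, v 0 = x₀ ∧ IsIntegralCurveOn v (fun _ ↦ f) (Ici 0) := by
  have hsol (n : ℕ) : ∃ w : ℝ → E, w 0 = x₀ ∧ IsIntegralCurveOn w (fun _ ↦ f) (Icc 0 n) :=
    -- a field bounded by `C` cannot leave the ball of radius `C * n` within time `n`
    IsPicardLindelof.exists_eq_forall_mem_Icc_hasDerivWithinAt₀ <|
      .of_time_independent (t₀ := ⟨0, le_rfl, n.cast_nonneg⟩) (a := C * n) (r := 0)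
        (fun x _ ↦ hC x) hf.lipschitzOnWith (by simp)
  choose w hw0 hw using hsol
  have hcompat {m n : ℕ} (hmn : m ≤ n) : EqOn (w m) (w n) (Icc 0 m) :=
    (hw m).eqOn_Icc_of_lipschitzOnWith hf.lipschitzOnWith (mapsTo_univ _ _)
      ((hw n).mono (Icc_subset_Icc_right (Nat.cast_le.2 hmn))) (mapsTo_univ _ _)
      ((hw0 m).trans (hw0 n).symm)
  set v : ℝ → E := fun t ↦ w (⌊t⌋₊ + 1) t
  have hvw (n : ℕ) : EqOn v (w n) (Icc 0 n) := fun t ht ↦ by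
    have ht' : t ≤ (⌊t⌋₊ + 1 : ℕ) := by push_cast; exact (Nat.lt_floor_add_one t).le
    rcases le_total (⌊t⌋₊ + 1) n with h | h
    · exact hcompat h ⟨ht.1, ht'⟩
    · exact (hcompat h ht).symm
  refine ⟨v, by simpa [v] using hw0 1, fun t ht ↦ ?_⟩
  have htn : t < (⌊t⌋₊ + 1 : ℕ) := by push_cast; exact Nat.lt_floor_add_one t
  have hmem : t ∈ Icc (0 : ℝ) (⌊t⌋₊ + 1 : ℕ) := ⟨ht, htn.le⟩
  rw [hvw _ hmem]
  exact ((hw _ t hmem).congr (hvw _) (hvw _ hmem)).mono_of_mem_nhdsWithin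
    (inter_mem_nhdsWithin _ (Iic_mem_nhds htn))

theorem IsIntegralCurveOn.norm_sub_le_of_radial {a : E} {μ : E → ℝ} (hμ : Continuous μ)
    (hμ_nonpos : ∀ x, μ x ≤ 0) {v : ℝ → E}
    (hv : IsIntegralCurveOn v (fun _ x ↦ μ x • (x - a)) (Ici 0)) {b : ℝ} (hb : 0 ≤ b) :
    ‖v b - a‖ ≤ ‖v 0 - a‖ := by
  set m : ℝ → ℝ := fun t ↦ -μ (v (max t 0))
  have hm : Continuous m :=
    .neg <| hμ.comp (hv.continuousOn.comp_continuous (by fun_prop) fun t ↦ le_max_right t 0)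
  set J : ℝ → ℝ := fun t ↦ ∫ τ in (0 : ℝ)..t, m τ
  have hJ (t : ℝ) : HasDerivAt J (m t) t :=
    intervalIntegral.integral_hasDerivAt_right (hm.intervalIntegrable _ _)
      (hm.stronglyMeasurableAtFilter _ _) hm.continuousAt
  -- integrating factor: `exp (J t) • (v t - a)` is constant
  set g : ℝ → E := fun t ↦ Real.exp (J t) • (v t - a)
  have hg_deriv : ∀ t ∈ Ico 0 b, HasDerivWithinAt g 0 (Ici t) t := fun t ht ↦ by
    have hmt : m t = -μ (v t) := by simp [m, max_eq_left ht.1]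
    refine (((hJ t).exp.hasDerivWithinAt (s := Ici t)).smul
      (((hv t ht.1).mono (Ici_subset_Ici.2 ht.1)).sub_const a)).congr_deriv ?_
    rw [hmt]
    module
  have hg_cont : ContinuousOn g (Icc 0 b) :=
    (Continuous.continuousOn (by fun_prop)).smul
      ((hv.continuousOn.mono Icc_subset_Ici_self).sub continuousOn_const)
  have hgb : g b = g 0 := constant_of_has_deriv_right_zero hg_cont hg_deriv b ⟨hb, le_rfl⟩
  have hJb : 0 ≤ J b := intervalIntegral.integral_nonneg hb fun t _ ↦ neg_nonneg.2 (hμ_nonpos _)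
  calc ‖v b - a‖ ≤ Real.exp (J b) * ‖v b - a‖ :=
        le_mul_of_one_le_left (norm_nonneg _) (Real.one_le_exp hJb)
    _ = ‖v 0 - a‖ := by
        simpa [g, J, norm_smul, abs_of_pos (Real.exp_pos _)] using congrArg norm hgb

theorem exists_isIntegralCurveOn_Ici_mapsTo_closedBall [CompleteSpace E] {a x₀ : E} {r : ℝ}
    (hr : 0 < r) {ψ : E → ℝ} {K : ℝ≥0}
    (hf : LipschitzOnWith K (fun x ↦ ψ x • (x - a)) (closedBall a r))
    (hψ : ContinuousOn ψ (closedBall a r)) (hψ_nonpos : ∀ x ∈ closedBall a r, ψ x ≤ 0)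
    (hx₀ : x₀ ∈ closedBall a r) :
    ∃ v : ℝ → E, v 0 = x₀ ∧ IsIntegralCurveOn v (fun _ x ↦ ψ x • (x - a)) (Ici 0) ∧
      MapsTo v (Ici 0) (closedBall a r) := by
  set f : E → E := fun x ↦ ψ x • (x - a)
  set P : E → E := radialRetraction a r
  have hP : MapsTo P univ (closedBall a r) := fun x _ ↦ radialRetraction_mem_closedBall hr x
  have hfP : LipschitzWith (K * 2) (f ∘ P) :=
    lipschitzOnWith_univ.1 (hf.comp (lipschitzWith_radialRetraction hr).lipschitzOnWith hP)
  obtain ⟨C, hC⟩ := isBounded_iff_forall_norm_le.1 (hf.isBounded_image isBounded_closedBall)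
  obtain ⟨v, hv0, hv⟩ := exists_isIntegralCurveOn_Ici_of_lipschitzWith hfP (C := C.toNNReal)
    (fun x ↦ (hC _ (mem_image_of_mem f (hP trivial))).trans (Real.le_coe_toNNReal C)) x₀
  set μ : E → ℝ := fun x ↦ ψ (P x) * (r / max ‖x - a‖ r)
  have hμ : Continuous μ :=
    (hψ.comp_continuous (lipschitzWith_radialRetraction hr).continuous fun x ↦ hP trivial).mul
      (continuous_const.div (by fun_prop) fun x ↦ (lt_max_of_lt_right hr).ne')
  have hμ_nonpos (x : E) : μ x ≤ 0 :=
    mul_nonpos_of_nonpos_of_nonneg (hψ_nonpos _ (hP trivial)) (by positivity)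
  have hfP_eq : f ∘ P = fun x ↦ μ x • (x - a) := funext fun x ↦ by
    simp only [Function.comp, f, μ, P, radialRetraction_sub_center, smul_smul]
  have hvB : MapsTo v (Ici 0) (closedBall a r) := fun t ht ↦ by
    rw [mem_closedBall, dist_eq_norm]
    refine ((hfP_eq ▸ hv).norm_sub_le_of_radial hμ hμ_nonpos ht).trans ?_
    rwa [hv0, ← dist_eq_norm, ← mem_closedBall]
  refine ⟨v, hv0, fun t ht ↦ (hv t ht).congr_deriv ?_, hvB⟩
  simp only [Function.comp, P, radialRetraction_of_mem_closedBall hr (hvB ht)]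

end Normed

/-- Global existence and uniqueness for the determining form on the
forward-invariant ball `B̄(a, 3R)`, with `ρ = 4R`. -/
theorem detform_global_existence
    {X : Type*} [NormedAddCommGroup X] [NormedSpace ℝ X] [CompleteSpace X]
    (R : ℝ) (hR : 0 < R) (a : X) (ha : ‖a‖ ≤ R)
    (G : X → X) (K : NNReal)
    (hG : LipschitzOnWith K G (Metric.closedBall 0 (4 * R))) :
    ∀ v0 ∈ Metric.closedBall a (3 * R),
      ∃ v : ℝ → X,
        (v 0 = v0
          ∧ (∀ s : ℝ, 0 ≤ s →
              HasDerivWithinAt v ((-(‖v s - G (v s)‖ ^ 2)) • (v s - a)) (Set.Ici 0) s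
              ∧ v s ∈ Metric.closedBall a (3 * R)))
        ∧ ∀ u : ℝ → X,
            (u 0 = v0
              ∧ (∀ s : ℝ, 0 ≤ s →
                  HasDerivWithinAt u ((-(‖u s - G (u s)‖ ^ 2)) • (u s - a)) (Set.Ici 0) s
                  ∧ u s ∈ Metric.closedBall a (3 * R))) →
            ∀ s : ℝ, 0 ≤ s → u s = v s := by
  intro v0 hv0
  have hball : closedBall a (3 * R) ⊆ closedBall 0 (4 * R) :=
    closedBall_subset_closedBall' (by rw [dist_zero_right]; linarith)
  have hG' := hG.mono hball
  obtain ⟨K', hF⟩ := hG'.exists_lipschitzOnWith_neg_sq_norm_sub_smul_sub isBounded_closedBall a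
  obtain ⟨v, hv0', hv, hvB⟩ := exists_isIntegralCurveOn_Ici_mapsTo_closedBall (by positivity) hF
    ((continuousOn_id.sub hG'.continuousOn).norm.pow 2).neg
    (fun x _ ↦ neg_nonpos.2 (sq_nonneg _)) hv0
  refine ⟨v, ⟨hv0', fun s hs ↦ ⟨hv s hs, hvB hs⟩⟩, ?_⟩
  rintro u ⟨hu0, hu⟩ s hs
  exact IsIntegralCurveOn.eqOn_Icc_of_lipschitzOnWith hF
    (fun t ht ↦ (hu t ht.1).1.mono Icc_subset_Ici_self) (fun t ht ↦ (hu t ht.1).2)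
    (hv.mono Icc_subset_Ici_self) (hvB.mono_left Icc_subset_Ici_self) (hu0.trans hv0'.symm)
    ⟨hs, le_rfl⟩
end

section
/- Convergence to steady states of the determining form: let X be a real Banach space, ρ > 0, a ∈ X with ‖a‖ ≤ ρ, G : X → X continuous and Lipschitz on B̄(0, ρ), and F(v) = −‖v − G(v)‖²·(v − a). If v : [0, ∞) → B̄(0, ρ) is differentiable with v'(s) = F(v(s)) for all s ≥ 0, then there exist β∞ ∈ [0, 1] and v∞ = β∞·v(0) + (1 − β∞)·a such that v(s) → v∞ in X as s → ∞ and F(v∞) = 0; that is, every such solution converges to a steady state of the equation v' = F(v). -/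
open Filter Real Set Topology

/-!
With `φ s = ‖v s - G (v s)‖ ^ 2` and `ψ` a primitive of `φ` vanishing at `0`, the equation is
linear along the ray from `a` through `v 0`: `v t - a = exp (-ψ t) • (v 0 - a)`. As `φ ≥ 0`,
`exp (-ψ)` decreases to some `β ∈ [0, 1]`, so `v` tends to `a + β • (v 0 - a)`. If `G` did not fix
this limit, `φ` would tend to a positive constant, `ψ` would tend to `∞` and `β` would be `0`; but
then the limit is `a`, which is a zero of the vector field anyway.
-/

theorem tendsto_atTop_of_hasDerivAt_of_tendsto_pos {f f' : ℝ → ℝ} {c : ℝ}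
    (hf : ∀ᶠ x in atTop, HasDerivAt f (f' x) x) (hf' : Tendsto f' atTop (𝓝 c)) (hc : 0 < c) :
    Tendsto f atTop atTop := by
  obtain ⟨T, hT⟩ :=
    (hf.and (hf'.eventually (eventually_ge_nhds (half_lt_self hc)))).exists_forall_of_atTop
  have hg : ∀ x, T ≤ x → HasDerivAt (fun x => f x - c / 2 * x) (f' x - c / 2) x := fun x hx =>
    (hT x hx).1.sub (((hasDerivAt_id x).const_mul (c / 2)).congr_deriv (mul_one _))
  have hg_mono : MonotoneOn (fun x => f x - c / 2 * x) (Ici T) := by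
    refine monotoneOn_of_hasDerivWithinAt_nonneg (f' := fun x => f' x - c / 2) (convex_Ici T)
      (fun x hx => (hg x hx).continuousAt.continuousWithinAt) (fun x hx => ?_) (fun x hx => ?_)
    · rw [interior_Ici] at hx ⊢
      exact (hg x hx.le).hasDerivWithinAt
    · rw [interior_Ici] at hx
      linarith [(hT x hx.le).2]
  refine tendsto_atTop_mono' _ ?_ <| tendsto_atTop_add_const_left _ (f T - c / 2 * T)
    (tendsto_id.const_mul_atTop (half_pos hc))
  filter_upwards [eventually_ge_atTop T] with x hx
  have := hg_mono (le_refl T) hx hx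
  simp only [id] at this ⊢
  linarith

theorem sub_eq_exp_smul_of_hasDerivAt {E : Type*} [NormedAddCommGroup E] [NormedSpace ℝ E]
    {v : ℝ → E} {a : E} {φ ψ : ℝ → ℝ} (hψ : ∀ s, 0 ≤ s → HasDerivAt ψ (φ s) s)
    (hv : ∀ s, 0 ≤ s → HasDerivAt v (-(φ s) • (v s - a)) s) {t : ℝ} (ht : 0 ≤ t) :
    v t - a = exp (ψ 0 - ψ t) • (v 0 - a) := by
  -- integrating factor
  set u : ℝ → E := fun s => exp (ψ s) • (v s - a)
  have hu : ∀ s, 0 ≤ s → HasDerivAt u 0 s := fun s hs => by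
    refine (((hψ s hs).exp).smul ((hv s hs).sub_const a)).congr_deriv ?_
    rw [smul_smul, ← add_smul, mul_neg, neg_add_cancel, zero_smul]
  have hu_const : u t = u 0 :=
    constant_of_has_deriv_right_zero (fun s hs => (hu s hs.1).continuousAt.continuousWithinAt)
      (fun s hs => (hu s hs.1).hasDerivWithinAt) t ⟨ht, le_rfl⟩
  calc v t - a = exp (-ψ t) • u t := by simp [u, smul_smul, ← exp_add]
    _ = exp (ψ 0 - ψ t) • (v 0 - a) := by
      rw [hu_const]; simp [u, smul_smul, ← exp_add, sub_eq_neg_add]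

theorem exists_tendsto_of_sub_eq_exp_smul {E : Type*} [NormedAddCommGroup E] [NormedSpace ℝ E]
    {v : ℝ → E} {a : E} {ψ : ℝ → ℝ} (hψ : Monotone ψ) (hψ0 : ψ 0 = 0)
    (hv : ∀ t, 0 ≤ t → v t - a = exp (-ψ t) • (v 0 - a)) :
    ∃ β ∈ Icc (0 : ℝ) 1, Tendsto (fun t => exp (-ψ t)) atTop (𝓝 β) ∧
      Tendsto v atTop (𝓝 (β • v 0 + (1 - β) • a)) := by
  have hexp_anti : Antitone fun t => exp (-ψ t) := fun _ _ hst =>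
    exp_le_exp.2 (neg_le_neg (hψ hst))
  have hexp_bdd : BddBelow (range fun t => exp (-ψ t)) := ⟨0, by rintro _ ⟨t, rfl⟩; positivity⟩
  set β := ⨅ t, exp (-ψ t)
  have hβ_lim : Tendsto (fun t => exp (-ψ t)) atTop (𝓝 β) := tendsto_atTop_ciInf hexp_anti hexp_bdd
  refine ⟨β, ⟨le_ciInf fun t => (exp_pos _).le, by simpa [hψ0] using ciInf_le hexp_bdd 0⟩,
    hβ_lim, ?_⟩
  have hlim : β • v 0 + (1 - β) • a = a + β • (v 0 - a) := by
    rw [smul_sub, sub_smul, one_smul]; abel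
  rw [hlim]
  refine (tendsto_const_nhds.add (hβ_lim.smul_const _)).congr' ?_
  filter_upwards [eventually_ge_atTop 0] with t ht
  rw [← hv t ht, add_sub_cancel]

theorem detform_convergence_to_steady_state_general
    {X : Type*} [NormedAddCommGroup X] [NormedSpace ℝ X]
    (a : X)
    (G : X → X) (hGcont : Continuous G)
    (v : ℝ → X)
    (hv : ∀ s : ℝ, 0 ≤ s →
      HasDerivAt v ((-(‖v s - G (v s)‖ ^ 2)) • (v s - a)) s) :
    ∃ β : ℝ, β ∈ Set.Icc (0:ℝ) 1 ∧
      Filter.Tendsto v Filter.atTop (nhds (β • v 0 + (1 - β) • a)) ∧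
      (-(‖(β • v 0 + (1 - β) • a) - G (β • v 0 + (1 - β) • a)‖ ^ 2))
          • ((β • v 0 + (1 - β) • a) - a) = 0 := by
  -- `v` solves the equation only on `[0, ∞)`; freezing it on the left makes `φ` continuous on `ℝ`
  set w : ℝ → X := fun s => v (max s 0)
  have hw_cont : Continuous w := ContinuousOn.comp_continuous
    (fun s hs => (hv s hs).continuousAt.continuousWithinAt) (continuous_id.max continuous_const)
    (fun s => le_max_right s 0)
  set φ : ℝ → ℝ := fun s => ‖w s - G (w s)‖ ^ 2
  have hφ_cont : Continuous φ := ((hw_cont.sub (hGcont.comp hw_cont)).norm).pow 2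
  set ψ : ℝ → ℝ := fun t => ∫ s in (0)..t, φ s
  have hψ : ∀ t, HasDerivAt ψ (φ t) t := fun t =>
    (hφ_cont.integral_hasStrictDerivAt 0 t).hasDerivAt
  have hv_eq : ∀ t, 0 ≤ t → v t - a = exp (-ψ t) • (v 0 - a) := fun t ht => by
    simpa [ψ] using sub_eq_exp_smul_of_hasDerivAt (fun s _ => hψ s)
      (fun s hs => by simpa [φ, w, max_eq_left hs] using hv s hs) ht
  obtain ⟨β, hβ, hβ_lim, hv_lim⟩ := exists_tendsto_of_sub_eq_exp_smul
    (monotone_of_hasDerivAt_nonneg hψ fun s => by positivity) intervalIntegral.integral_same hv_eq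
  refine ⟨β, hβ, hv_lim, ?_⟩
  set vlim := β • v 0 + (1 - β) • a
  rcases eq_or_ne ‖vlim - G vlim‖ 0 with h | hne
  · rw [h, sq, zero_mul, neg_zero, zero_smul]
  have hw_lim : Tendsto w atTop (𝓝 vlim) :=
    hv_lim.comp (tendsto_atTop_mono (le_max_left · 0) tendsto_id)
  have hφ_lim : Tendsto φ atTop (𝓝 (‖vlim - G vlim‖ ^ 2)) :=
    ((hw_lim.sub ((hGcont.tendsto vlim).comp hw_lim)).norm).pow 2
  have hψ_top : Tendsto ψ atTop atTop := tendsto_atTop_of_hasDerivAt_of_tendsto_pos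
    (Eventually.of_forall hψ) hφ_lim (pow_pos ((norm_nonneg _).lt_of_ne' hne) 2)
  have hβ0 : β = 0 := tendsto_nhds_unique hβ_lim (tendsto_exp_neg_atTop_nhds_zero.comp hψ_top)
  simp [vlim, hβ0]

/-- Every solution of the determining form converges, as `s → ∞`,
to a steady state which is a convex combination of `v 0` and `a`. -/
theorem detform_convergence_to_steady_state
    {X : Type*} [NormedAddCommGroup X] [NormedSpace ℝ X] [CompleteSpace X]
    (ρ : ℝ) (hρ : 0 < ρ) (a : X) (ha : ‖a‖ ≤ ρ)
    (G : X → X) (hGcont : Continuous G)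
    (K : NNReal) (hG : LipschitzOnWith K G (Metric.closedBall 0 ρ))
    (v : ℝ → X)
    (hvball : ∀ s : ℝ, 0 ≤ s → v s ∈ Metric.closedBall (0:X) ρ)
    (hv : ∀ s : ℝ, 0 ≤ s →
      HasDerivAt v ((-(‖v s - G (v s)‖ ^ 2)) • (v s - a)) s) :
    ∃ β : ℝ, β ∈ Set.Icc (0:ℝ) 1 ∧
      Filter.Tendsto v Filter.atTop (nhds (β • v 0 + (1 - β) • a)) ∧
      (-(‖(β • v 0 + (1 - β) • a) - G (β • v 0 + (1 - β) • a)‖ ^ 2))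
          • ((β • v 0 + (1 - β) • a) - a) = 0 :=
  detform_convergence_to_steady_state_general a G hGcont v hv
end

section
/- Barrier (continuation) lemma: let t0 ∈ ℝ, T ∈ (t0, ∞], M > 0, α > 0, and let y : [t0, T) → ℝ be a differentiable function with y(t) ≥ 0 for all t, y(t0) = 0, and such that for every t ∈ [t0, T) with y(t) ≤ M one has y'(t) + α·y(t) ≤ α·M/2. Then y(t) ≤ (M/2)·(1 − e^{−α(t − t0)}) for all t ∈ [t0, T); in particular y(t) < M/2 < M for all t ∈ [t0, T). -/
/-!
The barrier `B s = c (1 - e^{-α (s - a)})` solves `B' + α B = α c` with `B a = 0` and stays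
below `c`. As long as `y ≤ L` with `c ≤ L`, a strict differential inequality
`y' + α y < α c` forces `y' < B'` at any point where `y` touches `B`, so `y` never crosses `B`.
The non-strict inequality of the theorem is reached by replacing `c` with `c + ε`, `ε ↓ 0`.
-/

open Set Filter Topology Real

theorem hasDerivAt_mul_one_sub_exp (c α a s : ℝ) :
    HasDerivAt (fun s => c * (1 - exp (-(α * (s - a))))) (c * (α * exp (-(α * (s - a))))) s := by
  have hlin : HasDerivAt (fun s => -(α * (s - a))) (-α) s := by
    simpa [Pi.neg_def] using (((hasDerivAt_id' s).sub_const a).const_mul α).neg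
  have hexp := (hasDerivAt_exp _).comp s hlin
  exact (((hasDerivAt_const s 1).sub hexp).const_mul c).congr_deriv (by ring)

theorem le_mul_one_sub_exp_of_deriv_add_mul_lt {y y' : ℝ → ℝ} {a b α c L : ℝ}
    (hc : 0 ≤ c) (hcL : c ≤ L) (hy : ContinuousOn y (Icc a b))
    (hy' : ∀ x ∈ Ico a b, HasDerivWithinAt y (y' x) (Ici x) x) (ha : y a ≤ 0)
    (hbound : ∀ x ∈ Ico a b, y x ≤ L → y' x + α * y x < α * c) :
    ∀ x ∈ Icc a b, y x ≤ c * (1 - exp (-(α * (x - a)))) := by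
  refine image_le_of_deriv_right_lt_deriv_boundary hy hy' (by simpa using ha)
    (hasDerivAt_mul_one_sub_exp c α a) fun x hx hyx => ?_
  have hyL : y x ≤ L := by
    rw [hyx]
    nlinarith [exp_pos (-(α * (x - a)))]
  have := hbound x hx hyL
  rw [hyx] at this
  linarith

theorem le_mul_one_sub_exp_of_deriv_add_mul_le {y y' : ℝ → ℝ} {a b α c L : ℝ}
    (hα : 0 < α) (hc : 0 ≤ c) (hcL : c < L) (hy : ContinuousOn y (Icc a b))
    (hy' : ∀ x ∈ Ico a b, HasDerivWithinAt y (y' x) (Ici x) x) (ha : y a ≤ 0)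
    (hbound : ∀ x ∈ Ico a b, y x ≤ L → y' x + α * y x ≤ α * c) :
    ∀ x ∈ Icc a b, y x ≤ c * (1 - exp (-(α * (x - a)))) := by
  intro x hx
  have hlim : Tendsto (fun ε => (c + ε) * (1 - exp (-(α * (x - a))))) (𝓝[>] 0)
      (𝓝 (c * (1 - exp (-(α * (x - a)))))) := by
    have : Continuous fun ε => (c + ε) * (1 - exp (-(α * (x - a)))) := by fun_prop
    simpa using this.continuousAt.continuousWithinAt.tendsto (x := 0) (s := Ioi 0)
  refine ge_of_tendsto hlim ?_
  filter_upwards [Ioo_mem_nhdsGT (sub_pos.2 hcL)] with ε hε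
  refine le_mul_one_sub_exp_of_deriv_add_mul_lt (L := L) (by linarith [hε.1]) (by linarith [hε.2])
    hy hy' ha (fun x hx hyx => ?_) x hx
  nlinarith [hbound x hx hyx, hε.1]

theorem barrier_lemma_general
    (t0 : ℝ) (T : EReal)
    (M α : ℝ) (hM : 0 < M) (hα : 0 < α) (y y' : ℝ → ℝ)
    (hderiv : ∀ t : ℝ, t0 ≤ t → (t : EReal) < T →
      HasDerivWithinAt y (y' t) (Set.Ici t0) t)
    (hy0 : y t0 = 0)
    (hineq : ∀ t : ℝ, t0 ≤ t → (t : EReal) < T → y t ≤ M →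
      y' t + α * y t ≤ α * M / 2) :
    ∀ t : ℝ, t0 ≤ t → (t : EReal) < T →
      y t ≤ (M / 2) * (1 - Real.exp (-(α * (t - t0)))) ∧ y t < M / 2 := by
  intro t ht htT
  have hlt : ∀ x ∈ Icc t0 t, (x : EReal) < T := fun x hx =>
    (EReal.coe_le_coe_iff.2 hx.2).trans_lt htT
  have hcont : ContinuousOn y (Icc t0 t) := fun x hx =>
    (hderiv x hx.1 (hlt x hx)).continuousWithinAt.mono fun _ hz => hz.1
  have hy' : ∀ x ∈ Ico t0 t, HasDerivWithinAt y (y' x) (Ici x) x := fun x hx =>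
    (hderiv x hx.1 (hlt x (Ico_subset_Icc_self hx))).mono (Ici_subset_Ici.2 hx.1)
  have hle := le_mul_one_sub_exp_of_deriv_add_mul_le hα (half_pos hM).le (half_lt_self hM)
    hcont hy' hy0.le (fun x hx hyx => by
      simpa [mul_div_assoc] using hineq x hx.1 (hlt x (Ico_subset_Icc_self hx)) hyx)
    t (right_mem_Icc.2 ht)
  refine ⟨hle, hle.trans_lt ?_⟩
  nlinarith [exp_pos (-(α * (t - t0)))]

/-- Barrier (continuation) lemma. -/
theorem barrier_lemma
    (t0 : ℝ) (T : EReal) (hT : (t0 : EReal) < T)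
    (M α : ℝ) (hM : 0 < M) (hα : 0 < α) (y y' : ℝ → ℝ)
    (hderiv : ∀ t : ℝ, t0 ≤ t → (t : EReal) < T →
      HasDerivWithinAt y (y' t) (Set.Ici t0) t)
    (hnonneg : ∀ t : ℝ, t0 ≤ t → (t : EReal) < T → 0 ≤ y t)
    (hy0 : y t0 = 0)
    (hineq : ∀ t : ℝ, t0 ≤ t → (t : EReal) < T → y t ≤ M →
      y' t + α * y t ≤ α * M / 2) :
    ∀ t : ℝ, t0 ≤ t → (t : EReal) < T →
      y t ≤ (M / 2) * (1 - Real.exp (-(α * (t - t0)))) ∧ y t < M / 2 :=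
  barrier_lemma_general t0 T M α hM hα y y' hderiv hy0 hineq
end
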